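/- arXiv:2506.13071 — 2 statements merged into one kernel-verified Lean document; each statement's English description precedes it below -/
import Mathlib

section
/- Let r, s > 0 and p ∈ (0,1) be constants and let f(x, y) = x^s/(x+y)^r. For every C' > 0 there exists a constant C > 0 such that for all sufficiently large natural numbers n, m and all real x, y with x = np + r_x, y = mp + r_y, |r_x| ≤ C'·√(n·log n) and |r_y| ≤ C'·√(m·log m), the spectral norm of the Hessian of f at (x, y) satisfies ‖∇²f(x, y)‖₂ ≤ C · n^{s−2} · max{s(n+m), r·n}² / (n+m)^{r+2}. -/
/-!
On `x > 0`, `x + y > 0` the Hessian of `x ^ s / (x + y) ^ r` is `x ^ (s - 2) (x + y) ^ (-r - 2)`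
times a matrix whose entries are quadratic forms in `u = s (x + y)` and `v = r x`, so its norm is
`O(x ^ (s - 2) max (s (x + y), r x) ^ 2 / (x + y) ^ (r + 2))`. Since `√(n log n) = o(n)`, for large
`n, m` the point `x = n p + r_x` lies in `[p n / 2, 3 p n / 2]` and `x + y` in
`[p (n + m) / 2, 3 p (n + m) / 2]`, and rescaling within such ranges changes this expression by at
most a constant factor.
-/

open Real Filter

/-- The ratio function `f(x, y) = x^s / (x+y)^r` (real powers). -/
noncomputable def ratioFun (r s : ℝ) (x y : ℝ) : ℝ := x ^ s / (x + y) ^ r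

/-- The Hessian matrix of second partial derivatives of `ratioFun r s` at `(x, y)`. -/
noncomputable def ratioHessian (r s : ℝ) (x y : ℝ) : Matrix (Fin 2) (Fin 2) ℝ :=
  !![deriv (fun a => deriv (fun a' => ratioFun r s a' y) a) x,
     deriv (fun b => deriv (fun a => ratioFun r s a b) x) y;
     deriv (fun a => deriv (fun b => ratioFun r s a b) y) x,
     deriv (fun b => deriv (fun b' => ratioFun r s x b') b) y]

open Topology Asymptotics Set

theorem hasDerivAt_deriv_of_eventually {F : ℝ → ℝ → ℝ} {G u : ℝ → ℝ} {c t₀ : ℝ}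
    (hF : ∀ᶠ t in 𝓝 t₀, HasDerivAt (F t) (G t) (u t)) (hG : HasDerivAt G c t₀) :
    HasDerivAt (fun t => deriv (F t) (u t)) c t₀ :=
  hG.congr_of_eventuallyEq (hF.mono fun _ h => h.deriv)

section Monomial

variable {α β x y : ℝ}

theorem hasDerivAt_rpow_mul_add_rpow_left (hx : 0 < x) (hxy : 0 < x + y) :
    HasDerivAt (fun a => a ^ α * (a + y) ^ β)
      (α * x ^ (α - 1) * (x + y) ^ β + β * x ^ α * (x + y) ^ (β - 1)) x := by
  refine ((hasDerivAt_rpow_const (Or.inl hx.ne')).fun_mul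
    (((hasDerivAt_id' x).add_const y).rpow_const (Or.inl hxy.ne'))).congr_deriv ?_
  ring

theorem hasDerivAt_rpow_mul_add_rpow_right (hxy : 0 < x + y) :
    HasDerivAt (fun b => x ^ α * (x + b) ^ β) (β * x ^ α * (x + y) ^ (β - 1)) y := by
  refine ((((hasDerivAt_id' y).const_add x).rpow_const (Or.inl hxy.ne')).const_mul
    (x ^ α)).congr_deriv ?_
  ring

end Monomial

section Partials

variable {r s x y : ℝ}

theorem ratioFun_eq_rpow_mul_rpow (hxy : 0 ≤ x + y) :
    ratioFun r s x y = x ^ s * (x + y) ^ (-r) := by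
  rw [ratioFun, rpow_neg hxy, div_eq_mul_inv]

theorem eventually_pos_and_add_pos_nhds (hx : 0 < x) (hxy : 0 < x + y) :
    ∀ᶠ a in 𝓝 x, 0 < a ∧ 0 < a + y :=
  (eventually_gt_nhds hx).and
    ((continuous_id.add continuous_const).continuousAt.eventually (eventually_gt_nhds hxy))

theorem eventually_add_pos_nhds (hxy : 0 < x + y) : ∀ᶠ b in 𝓝 y, 0 < x + b :=
  (continuous_const.add continuous_id).continuousAt.eventually (eventually_gt_nhds hxy)

theorem hasDerivAt_ratioFun_left (hx : 0 < x) (hxy : 0 < x + y) :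
    HasDerivAt (fun a => ratioFun r s a y)
      (s * (x ^ (s - 1) * (x + y) ^ (-r)) - r * (x ^ s * (x + y) ^ (-r - 1))) x :=
  ((hasDerivAt_rpow_mul_add_rpow_left hx hxy).congr_deriv (by ring)).congr_of_eventuallyEq <|
    (eventually_pos_and_add_pos_nhds hx hxy).mono fun _ ha => ratioFun_eq_rpow_mul_rpow ha.2.le

theorem hasDerivAt_ratioFun_right (hxy : 0 < x + y) :
    HasDerivAt (fun b => ratioFun r s x b) (-(r * (x ^ s * (x + y) ^ (-r - 1)))) y :=
  ((hasDerivAt_rpow_mul_add_rpow_right hxy).congr_deriv (by ring)).congr_of_eventuallyEq <|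
    (eventually_add_pos_nhds hxy).mono fun _ hb => ratioFun_eq_rpow_mul_rpow hb.le

theorem ratioHessian_eq (hx : 0 < x) (hxy : 0 < x + y) :
    ratioHessian r s x y = (x ^ (s - 2) * (x + y) ^ (-r - 2)) •
      !![s * (s - 1) * (x + y) ^ 2 - 2 * r * s * x * (x + y) + r * (r + 1) * x ^ 2,
         r * (r + 1) * x ^ 2 - r * s * x * (x + y);
         r * (r + 1) * x ^ 2 - r * s * x * (x + y), r * (r + 1) * x ^ 2] := by
  have h00 := hasDerivAt_deriv_of_eventually (F := fun _ a => ratioFun r s a y) (u := fun a => a)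
    ((eventually_pos_and_add_pos_nhds hx hxy).mono fun _ ha => hasDerivAt_ratioFun_left ha.1 ha.2)
    (((hasDerivAt_rpow_mul_add_rpow_left hx hxy).const_mul s).fun_sub
      ((hasDerivAt_rpow_mul_add_rpow_left hx hxy).const_mul r))
  have h01 := hasDerivAt_deriv_of_eventually (F := fun b a => ratioFun r s a b) (u := fun _ => x)
    ((eventually_add_pos_nhds hxy).mono fun _ hb => hasDerivAt_ratioFun_left hx hb)
    (((hasDerivAt_rpow_mul_add_rpow_right hxy).const_mul s).fun_sub
      ((hasDerivAt_rpow_mul_add_rpow_right hxy).const_mul r))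
  have h10 := hasDerivAt_deriv_of_eventually (F := fun a b => ratioFun r s a b) (u := fun _ => y)
    ((eventually_pos_and_add_pos_nhds hx hxy).mono fun _ ha => hasDerivAt_ratioFun_right ha.2)
    ((hasDerivAt_rpow_mul_add_rpow_left hx hxy).const_mul r).fun_neg
  have h11 := hasDerivAt_deriv_of_eventually (F := fun _ b => ratioFun r s x b) (u := fun a => a)
    ((eventually_add_pos_nhds hxy).mono fun _ hb => hasDerivAt_ratioFun_right hb)
    ((hasDerivAt_rpow_mul_add_rpow_right hxy).const_mul r).fun_neg
  ext i j
  fin_cases i <;> fin_cases j <;>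
    simp only [ratioHessian, h00.deriv, h01.deriv, h10.deriv, h11.deriv, Fin.zero_eta,
      Fin.mk_one, Matrix.smul_apply, Matrix.of_apply, Matrix.cons_val', Matrix.cons_val_zero,
      Matrix.cons_val_one, Matrix.empty_val', Matrix.cons_val_fin_one, smul_eq_mul] <;>
    simp only [rpow_sub hx, rpow_sub hxy, rpow_neg hxy.le, rpow_one, rpow_two] <;>
    field_simp <;> ring

end Partials

theorem EuclideanSpace.norm_le_sum_abs {n : Type*} [Fintype n] (v : EuclideanSpace ℝ n) :
    ‖v‖ ≤ ∑ i, |v i| := by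
  classical
  conv_lhs => rw [← (EuclideanSpace.basisFun n ℝ).sum_repr v]
  refine (norm_sum_le _ _).trans_eq ?_
  simp [norm_smul]

theorem Matrix.norm_toEuclideanCLM_le_sum_abs {n : Type*} [Fintype n] [DecidableEq n]
    (A : Matrix n n ℝ) : ‖Matrix.toEuclideanCLM (𝕜 := ℝ) A‖ ≤ ∑ i, ∑ j, |A i j| := by
  refine ContinuousLinearMap.opNorm_le_bound _ (by positivity) fun x => ?_
  calc ‖Matrix.toEuclideanCLM (𝕜 := ℝ) A x‖ ≤ ∑ i, |(A.mulVec x.ofLp) i| :=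
        EuclideanSpace.norm_le_sum_abs _
    _ ≤ ∑ i, ∑ j, |A i j| * ‖x‖ := by
        gcongr with i
        refine (Finset.abs_sum_le_sum_abs _ _).trans (Finset.sum_le_sum fun j _ => ?_)
        rw [abs_mul]
        gcongr
        simpa using PiLp.norm_apply_le x j
    _ = (∑ i, ∑ j, |A i j|) * ‖x‖ := by simp only [Finset.sum_mul]

theorem abs_quadratic_le {a b c u v M : ℝ} (hu : |u| ≤ M) (hv : |v| ≤ M) :
    |a * u ^ 2 + b * u * v + c * v ^ 2| ≤ (|a| + |b| + |c|) * M ^ 2 := by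
  have hM : 0 ≤ M := (abs_nonneg u).trans hu
  have huv : |u| * |v| ≤ M ^ 2 := by nlinarith [abs_nonneg u, abs_nonneg v]
  have hu2 : |u| ^ 2 ≤ M ^ 2 := pow_le_pow_left₀ (abs_nonneg u) hu 2
  have hv2 : |v| ^ 2 ≤ M ^ 2 := pow_le_pow_left₀ (abs_nonneg v) hv 2
  calc |a * u ^ 2 + b * u * v + c * v ^ 2|
      ≤ |a| * |u| ^ 2 + |b| * (|u| * |v|) + |c| * |v| ^ 2 := by
        refine (abs_add_three _ _ _).trans_eq ?_
        simp only [abs_mul, abs_pow]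
        ring
    _ ≤ (|a| + |b| + |c|) * M ^ 2 := by
        nlinarith [abs_nonneg a, abs_nonneg b, abs_nonneg c]

noncomputable def ratioScale (r s x y : ℝ) : ℝ :=
  x ^ (s - 2) * max (s * (x + y)) (r * x) ^ 2 / (x + y) ^ (r + 2)

theorem norm_ratioHessian_le {r s x y : ℝ} (hr : 0 < r) (hs : 0 < s) (hx : 0 < x)
    (hxy : 0 < x + y) :
    ‖Matrix.toEuclideanCLM (𝕜 := ℝ) (ratioHessian r s x y)‖ ≤
      (|(s - 1) / s| + 4 + 4 * ((r + 1) / r)) * ratioScale r s x y := by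
  rw [ratioHessian_eq hx hxy, map_smul, norm_smul, ratioScale]
  set z := x + y
  set M := max (s * z) (r * x)
  set κ := |(s - 1) / s| + 4 + 4 * ((r + 1) / r)
  have hu : |s * z| ≤ M := (abs_of_pos (by positivity)).trans_le (le_max_left _ _)
  have hv : |r * x| ≤ M := (abs_of_pos (by positivity)).trans_le (le_max_right _ _)
  have hQ : ‖Matrix.toEuclideanCLM (𝕜 := ℝ) !![s * (s - 1) * z ^ 2 - 2 * r * s * x * z +
      r * (r + 1) * x ^ 2, r * (r + 1) * x ^ 2 - r * s * x * z; r * (r + 1) * x ^ 2 -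
      r * s * x * z, r * (r + 1) * x ^ 2]‖ ≤ κ * M ^ 2 := by
    -- in the variables `u = s z`, `v = r x` the entries are quadratic forms
    have h00 := abs_quadratic_le (a := (s - 1) / s) (b := -2) (c := (r + 1) / r) hu hv
    have h01 := abs_quadratic_le (a := 0) (b := -1) (c := (r + 1) / r) hu hv
    have h11 := abs_quadratic_le (a := 0) (b := 0) (c := (r + 1) / r) hu hv
    have e00 : s * (s - 1) * z ^ 2 - 2 * r * s * x * z + r * (r + 1) * x ^ 2 =
        (s - 1) / s * (s * z) ^ 2 + -2 * (s * z) * (r * x) + (r + 1) / r * (r * x) ^ 2 := by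
      field_simp; ring
    have e01 : r * (r + 1) * x ^ 2 - r * s * x * z =
        0 * (s * z) ^ 2 + -1 * (s * z) * (r * x) + (r + 1) / r * (r * x) ^ 2 := by
      field_simp; ring
    have e11 : r * (r + 1) * x ^ 2 =
        0 * (s * z) ^ 2 + 0 * (s * z) * (r * x) + (r + 1) / r * (r * x) ^ 2 := by
      field_simp; ring
    refine (Matrix.norm_toEuclideanCLM_le_sum_abs _).trans ?_
    simp only [Fin.sum_univ_two, Matrix.of_apply, Matrix.cons_val', Matrix.cons_val_zero,
      Matrix.cons_val_one, Matrix.empty_val', Matrix.cons_val_fin_one]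
    rw [e00, e01, e11]
    simp only [abs_neg, abs_two, abs_one, abs_zero,
      abs_of_pos (show 0 < (r + 1) / r by positivity)] at h00 h01 h11
    linarith
  have hT : 0 ≤ x ^ (s - 2) * z ^ (-r - 2) := by positivity
  calc ‖x ^ (s - 2) * z ^ (-r - 2)‖ * _ ≤ x ^ (s - 2) * z ^ (-r - 2) * (κ * M ^ 2) := by
        rw [Real.norm_of_nonneg hT]
        gcongr
    _ = κ * (x ^ (s - 2) * M ^ 2 / z ^ (r + 2)) := by
        rw [show -r - 2 = -(r + 2) by ring, rpow_neg hxy.le]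
        ring

theorem rpow_le_max_mul_rpow_of_mem_Icc {α β u v : ℝ} (t : ℝ) (hα : 0 < α) (hu : 0 < u)
    (hv : v ∈ Icc (α * u) (β * u)) : v ^ t ≤ max (α ^ t) (β ^ t) * u ^ t := by
  have hv0 : 0 < v := (mul_pos hα hu).trans_le hv.1
  rcases le_total 0 t with ht | ht
  · calc v ^ t ≤ (β * u) ^ t := rpow_le_rpow hv0.le hv.2 ht
      _ = β ^ t * u ^ t := mul_rpow (nonneg_of_mul_nonneg_left (hv0.le.trans hv.2) hu) hu.le
      _ ≤ _ := by gcongr; exact le_max_right _ _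
  · calc v ^ t ≤ (α * u) ^ t := rpow_le_rpow_of_nonpos (by positivity) hv.1 ht
      _ = α ^ t * u ^ t := mul_rpow hα.le hu.le
      _ ≤ _ := by gcongr; exact le_max_left _ _

theorem ratioScale_le_of_mem_Icc {r s α β a b x y : ℝ} (hr : 0 ≤ r) (hs : 0 ≤ s) (hα : 0 < α)
    (ha : 0 < a) (hab : 0 < a + b) (hx : x ∈ Icc (α * a) (β * a))
    (hxy : x + y ∈ Icc (α * (a + b)) (β * (a + b))) :
    ratioScale r s x y ≤ max (α ^ (s - 2)) (β ^ (s - 2)) * β ^ 2 / α ^ (r + 2) *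
      ratioScale r s a b := by
  have hβ : 0 < β := pos_of_mul_pos_left ((mul_pos hα ha).trans_le (hx.1.trans hx.2)) ha.le
  have hpow := rpow_le_max_mul_rpow_of_mem_Icc (s - 2) hα ha hx
  have hmax : max (s * (x + y)) (r * x) ≤ β * max (s * (a + b)) (r * a) := by
    rw [mul_max_of_nonneg _ _ hβ.le]
    exact max_le_max (by nlinarith [hxy.2]) (by nlinarith [hx.2])
  have hden : (α * (a + b)) ^ (r + 2) ≤ (x + y) ^ (r + 2) :=
    rpow_le_rpow (by positivity) hxy.1 (by linarith)
  have hmax0 : 0 ≤ max (s * (x + y)) (r * x) :=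
    le_max_of_le_left (mul_nonneg hs ((mul_pos hα hab).le.trans hxy.1))
  calc x ^ (s - 2) * max (s * (x + y)) (r * x) ^ 2 / (x + y) ^ (r + 2)
      ≤ max (α ^ (s - 2)) (β ^ (s - 2)) * a ^ (s - 2) *
          (β * max (s * (a + b)) (r * a)) ^ 2 / (α * (a + b)) ^ (r + 2) := by
        gcongr
    _ = _ := by
        rw [ratioScale, mul_rpow hα.le hab.le]
        field_simp

theorem isLittleO_sqrt_mul_log_atTop : (fun x => √(x * log x)) =o[atTop] id := by
  refine isLittleO_iff.2 fun c hc => ?_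
  filter_upwards [isLittleO_log_id_atTop.bound (pow_pos hc 2), eventually_ge_atTop 0]
    with x hlog hx
  rw [norm_eq_abs, norm_eq_abs, id, abs_of_nonneg hx] at hlog
  rw [norm_of_nonneg (sqrt_nonneg _), id, norm_of_nonneg hx, sqrt_le_left (by positivity)]
  nlinarith [le_abs_self (log x)]

theorem eventually_mul_sqrt_mul_log_le (c : ℝ) {ε : ℝ} (hε : 0 < ε) :
    ∀ᶠ n : ℕ in atTop, c * √(n * log n) ≤ ε * n := by
  filter_upwards [((isLittleO_sqrt_mul_log_atTop.const_mul_left c).comp_tendsto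
    tendsto_natCast_atTop_atTop).bound hε] with n hn
  simpa using (le_abs_self _).trans hn

theorem ratioHessian_norm_bound_general (r s p : ℝ) (hr : 0 < r) (hs : 0 < s)
    (hp0 : 0 < p) (C' : ℝ) :
    ∃ C > 0, ∃ N : ℕ, ∀ n m : ℕ, N ≤ n → N ≤ m →
      ∀ rx ry : ℝ, |rx| ≤ C' * Real.sqrt (n * Real.log n) →
        |ry| ≤ C' * Real.sqrt (m * Real.log m) →
        ‖Matrix.toEuclideanCLM (𝕜 := ℝ) (ratioHessian r s (n * p + rx) (m * p + ry))‖ ≤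
          C * (n : ℝ) ^ (s - 2) * (max (s * ((n : ℝ) + (m : ℝ))) (r * (n : ℝ))) ^ 2 /
            ((n : ℝ) + (m : ℝ)) ^ (r + 2) := by
  set κ := |(s - 1) / s| + 4 + 4 * ((r + 1) / r)
  set K := max ((p / 2) ^ (s - 2)) ((3 * p / 2) ^ (s - 2)) * (3 * p / 2) ^ 2 / (p / 2) ^ (r + 2)
  obtain ⟨N, hN⟩ := eventually_atTop.1 <|
    (eventually_mul_sqrt_mul_log_le C' (half_pos hp0)).and (eventually_gt_atTop 0)
  refine ⟨κ * K, by positivity, N, fun n m hn hm rx ry hrx hry => ?_⟩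
  obtain ⟨hn_log, hn0⟩ := hN n hn
  obtain ⟨hm_log, hm0⟩ := hN m hm
  have hn0' : (0 : ℝ) < n := Nat.cast_pos.2 hn0
  have hrx' := abs_le.1 (hrx.trans hn_log)
  have hry' := abs_le.1 (hry.trans hm_log)
  have hx : n * p + rx ∈ Icc (p / 2 * n) (3 * p / 2 * n) := by constructor <;> linarith
  have hxy : n * p + rx + (m * p + ry) ∈ Icc (p / 2 * (n + m)) (3 * p / 2 * (n + m)) := by
    constructor <;> linarith
  calc _ ≤ κ * ratioScale r s (n * p + rx) (m * p + ry) :=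
        norm_ratioHessian_le hr hs ((by positivity : (0 : ℝ) < _).trans_le hx.1)
          ((by positivity : (0 : ℝ) < _).trans_le hxy.1)
    _ ≤ κ * (K * ratioScale r s n m) := by
        gcongr
        exact ratioScale_le_of_mem_Icc hr.le hs.le (half_pos hp0) hn0' (by positivity) hx hxy
    _ = _ := by rw [ratioScale]; ring

/-- For `r, s > 0`, `p ∈ (0,1)` and every `C' > 0`, there is a constant `C > 0` such that for
all sufficiently large `n, m` and all `x = np + r_x`, `y = mp + r_y` with
`|r_x| ≤ C'√(n log n)`, `|r_y| ≤ C'√(m log m)`, the spectral norm of the Hessian of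
`f(x,y) = x^s/(x+y)^r` at `(x, y)` is at most `C · n^(s−2) · max{s(n+m), rn}² / (n+m)^(r+2)`. -/
theorem ratioHessian_norm_bound (r s p : ℝ) (hr : 0 < r) (hs : 0 < s)
    (hp0 : 0 < p) (hp1 : p < 1) (C' : ℝ) (hC' : 0 < C') :
    ∃ C > 0, ∃ N : ℕ, ∀ n m : ℕ, N ≤ n → N ≤ m →
      ∀ rx ry : ℝ, |rx| ≤ C' * Real.sqrt (n * Real.log n) →
        |ry| ≤ C' * Real.sqrt (m * Real.log m) →
        ‖Matrix.toEuclideanCLM (𝕜 := ℝ) (ratioHessian r s (n * p + rx) (m * p + ry))‖ ≤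
          C * (n : ℝ) ^ (s - 2) * (max (s * ((n : ℝ) + (m : ℝ))) (r * (n : ℝ))) ^ 2 /
            ((n : ℝ) + (m : ℝ)) ^ (r + 2) :=
  ratioHessian_norm_bound_general r s p hr hs hp0 C'
end

section
/- Let r, s > 0 and p ∈ (0,1) be constants and let f(x, y) = x^s/(x+y)^r. For each n let m = m(n) satisfy m(n)/n → ∞ and m(n)·log(m(n))/n^{3/2} → 0. Let X ~ Binomial(n, p) and Y ~ Binomial(m, p) be independent, and let Q(X, Y) = f(X, Y) − f(np, mp) − ∇f(np, mp)·(X − np, Y − mp) denote the first-order Taylor remainder. Then (m^r/n^{s−1/2})·Q(X, Y) converges to 0 in probability as n → ∞. -/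
/-!
Write `x = a (1 + h₁)` and `x + y = (a + b) (1 + h₂)`. By homogeneity of `x ^ s` and
`(x + y) ^ (-r)`, the Taylor remainder of `f` about `(a, b)` is `f(a, b)` times the Taylor
remainder at `0` of `(h₁, h₂) ↦ (1 + h₁) ^ s (1 + h₂) ^ (-r)`, which is `O(‖h‖²)` because this
function is `C²` near `0`. For `a = np`, `b = mp` the factor `m ^ r / n ^ (s - 1/2) · f(np, mp)` is
at most `p ^ (s - r) √n`. By Chebyshev's inequality, and since `m ≥ n` eventually, `X` and `Y`
stay within relative distance `η = n ^ (-3/8)` of their means outside an event of probability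
`O(1 / (n η²)) = O(n ^ (-1/4))`; there the scaled remainder is `O(√n η²) = O(n ^ (-1/4))`.
-/

open MeasureTheory ProbabilityTheory Real Filter

/-- The ratio function `f(x, y) = x^s / (x+y)^r` as a function on `ℝ × ℝ` (real powers);
it equals `0` when `x = 0` or when `x + y = 0`. -/
noncomputable def ratioFunP (r s : ℝ) (q : ℝ × ℝ) : ℝ := q.1 ^ s / (q.1 + q.2) ^ r

/-- The first-order Taylor remainder of `f(x,y) = x^s/(x+y)^r` about `(np, mp)`:
`Q(x, y) = f(x, y) − f(np, mp) − ∇f(np, mp)·(x − np, y − mp)`. -/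
noncomputable def taylorRem (r s : ℝ) (np mp x y : ℝ) : ℝ :=
  ratioFunP r s (x, y) - ratioFunP r s (np, mp) -
    fderiv ℝ (ratioFunP r s) (np, mp) (x - np, y - mp)

open Asymptotics Topology

theorem ContDiffAt.isBigO_sub_sub_fderiv {E F : Type*} [NormedAddCommGroup E] [NormedSpace ℝ E]
    [NormedAddCommGroup F] [NormedSpace ℝ F] {f : E → F} {a : E} (hf : ContDiffAt ℝ 2 f a) :
    (fun x => f x - f a - fderiv ℝ f a (x - a)) =O[𝓝 a] fun x => ‖x - a‖ ^ 2 := by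
  have hdiff : ∀ᶠ x in 𝓝 a, DifferentiableAt ℝ f x :=
    hf.eventually (by simp) |>.mono fun x hx => hx.differentiableAt (by norm_num)
  obtain ⟨C, hC0, hC⟩ :=
    ((hf.fderiv_right (m := 1) le_rfl).differentiableAt one_ne_zero).isBigO_sub.exists_nonneg
  obtain ⟨δ, hδ, hball⟩ := Metric.eventually_nhds_iff_ball.1 (hdiff.and hC.bound)
  refine IsBigO.of_bound C ?_
  filter_upwards [Metric.ball_mem_nhds a hδ] with x hx
  have hsub : Metric.closedBall a ‖x - a‖ ⊆ Metric.ball a δ :=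
    Metric.closedBall_subset_ball (by rwa [← dist_eq_norm])
  have hbound : ∀ z ∈ Metric.closedBall a ‖x - a‖, ‖fderiv ℝ f z - fderiv ℝ f a‖ ≤ C * ‖x - a‖ :=
    fun z hz => (hball z (hsub hz)).2.trans
      (mul_le_mul_of_nonneg_left (by rwa [← dist_eq_norm]) hC0)
  have key := (convex_closedBall a ‖x - a‖).norm_image_sub_le_of_norm_hasFDerivWithin_le'
    (fun z hz => (hball z (hsub hz)).1.hasFDerivAt.hasFDerivWithinAt) hbound
    (Metric.mem_closedBall_self (norm_nonneg _))
    (show x ∈ Metric.closedBall a ‖x - a‖ by simp [dist_eq_norm])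
  rwa [norm_pow, norm_norm, sq, ← mul_assoc]

noncomputable def relTaylorRem (r s : ℝ) (h : ℝ × ℝ) : ℝ :=
  (1 + h.1) ^ s * (1 + h.2) ^ (-r) - 1 - (s * h.1 - r * h.2)

theorem relTaylorRem_isBigO (r s : ℝ) : relTaylorRem r s =O[𝓝 0] fun h => ‖h‖ ^ 2 := by
  let g : ℝ × ℝ → ℝ := fun h => (1 + h.1) ^ s * (1 + h.2) ^ (-r)
  have hg : ContDiffAt ℝ 2 g 0 :=
    ((contDiffAt_const.add contDiffAt_fst).rpow_const_of_ne (by simp)).mul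
      ((contDiffAt_const.add contDiffAt_snd).rpow_const_of_ne (by simp))
  have hg' : HasFDerivAt g
      (s • ContinuousLinearMap.fst ℝ ℝ ℝ - r • ContinuousLinearMap.snd ℝ ℝ ℝ) 0 := by
    have := ((hasFDerivAt_fst (p := (0 : ℝ × ℝ))).const_add 1 |>.rpow_const (p := s)
      (by simp)).mul ((hasFDerivAt_snd (p := (0 : ℝ × ℝ))).const_add 1 |>.rpow_const (p := -r)
      (by simp))
    exact this.congr_fderiv (by ext <;> simp)
  refine hg.isBigO_sub_sub_fderiv.congr (fun h => ?_) (fun h => by simp)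
  simp [relTaylorRem, g, hg'.fderiv]

theorem exists_abs_relTaylorRem_le (r s : ℝ) :
    ∃ K ≥ 0, ∃ δ > 0, δ < 1 ∧ ∀ h : ℝ × ℝ, ‖h‖ ≤ δ → |relTaylorRem r s h| ≤ K * ‖h‖ ^ 2 := by
  obtain ⟨K, hK0, hK⟩ := (relTaylorRem_isBigO r s).exists_nonneg
  obtain ⟨ε, hε, hball⟩ := Metric.eventually_nhds_iff.1 hK.bound
  refine ⟨K, hK0, min (ε / 2) (1 / 2), by positivity,
    (min_le_right _ _).trans_lt (by norm_num), fun h hh => ?_⟩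
  have := hball (y := h) <| by
    rw [dist_zero_right]; exact hh.trans_lt ((min_le_left _ _).trans_lt (half_lt_self hε))
  rwa [norm_pow, norm_norm] at this

theorem fderiv_ratioFunP_apply (r s : ℝ) {q : ℝ × ℝ} (h1 : 0 < q.1) (h2 : 0 < q.1 + q.2)
    (v : ℝ × ℝ) :
    fderiv ℝ (ratioFunP r s) q v =
      s * q.1 ^ (s - 1) * (q.1 + q.2) ^ (-r) * v.1 -
        r * q.1 ^ s * (q.1 + q.2) ^ (-r - 1) * (v.1 + v.2) := by
  have heq : ratioFunP r s =ᶠ[𝓝 q] fun z => z.1 ^ s * (z.1 + z.2) ^ (-r) := by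
    filter_upwards [continuousAt_const.eventually_lt
      (continuous_fst.add continuous_snd).continuousAt h2] with z (hz : 0 < z.1 + z.2)
    rw [ratioFunP, rpow_neg hz.le, div_eq_mul_inv]
  have hd := (hasFDerivAt_fst.rpow_const (p := s) (Or.inl h1.ne')).mul
    ((hasFDerivAt_fst.add hasFDerivAt_snd).rpow_const (p := -r) (Or.inl h2.ne'))
  rw [(hd.congr_of_eventuallyEq heq).fderiv]
  simp only [Pi.add_apply, neg_mul, smul_add, neg_smul, smul_neg, add_apply, neg_apply,
    smul_apply, ContinuousLinearMap.coe_fst', smul_eq_mul, ContinuousLinearMap.coe_snd']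
  ring

theorem taylorRem_eq_mul_relTaylorRem (r s : ℝ) {a b x y : ℝ} (ha : 0 < a) (hab : 0 < a + b)
    (hx : 0 < x) (hxy : 0 < x + y) :
    taylorRem r s a b x y =
      ratioFunP r s (a, b) * relTaylorRem r s ((x - a) / a, (x + y - (a + b)) / (a + b)) := by
  have h1 : 1 + (x - a) / a = x / a := by field_simp; ring
  have h2 : 1 + (x + y - (a + b)) / (a + b) = (x + y) / (a + b) := by field_simp; ring
  simp only [taylorRem, relTaylorRem, ratioFunP, fderiv_ratioFunP_apply r s (q := (a, b)) ha hab,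
    h1, h2, div_rpow hx.le ha.le, div_rpow hxy.le hab.le, rpow_sub_one ha.ne',
    rpow_sub_one hab.ne', rpow_neg hxy.le, rpow_neg hab.le]
  field_simp
  ring

theorem sum_sq_sub_mul_binomial (n : ℕ) (p : ℝ) :
    ∑ k ∈ Finset.range (n + 1), ((k : ℝ) - n * p) ^ 2 * (n.choose k * p ^ k * (1 - p) ^ (n - k)) =
      n * p * (1 - p) := by
  have := congrArg (Polynomial.eval p) (bernsteinPolynomial.variance ℝ n)
  simp only [Polynomial.eval_finsetSum, bernsteinPolynomial, Polynomial.eval_mul,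
    Polynomial.eval_pow, Polynomial.eval_sub, Polynomial.eval_X,
    Polynomial.eval_natCast, Polynomial.eval_one, nsmul_eq_mul] at this
  rw [← this]
  exact Finset.sum_congr rfl fun k _ => by ring

theorem measure_lt_abs_sub_le_of_binomial {Ω : Type*} [MeasurableSpace Ω] (P : Measure Ω)
    {p : ℝ} (hp0 : 0 ≤ p) (hp1 : p ≤ 1) (X : Ω → ℕ) (n : ℕ)
    (hX : ∀ k, P {ω | X ω = k} = ENNReal.ofReal (n.choose k * p ^ k * (1 - p) ^ (n - k)))
    {t : ℝ} (ht : 0 < t) :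
    P {ω | t < |(X ω : ℝ) - n * p|} ≤ ENNReal.ofReal (n * p * (1 - p) / t ^ 2) := by
  set w : ℕ → ℝ := fun k => n.choose k * p ^ k * (1 - p) ^ (n - k)
  set g : ℕ → ℝ := fun k => ((k : ℝ) - n * p) ^ 2 / t ^ 2 * w k
  have hw : ∀ k, 0 ≤ w k := fun k =>
    mul_nonneg (mul_nonneg (Nat.cast_nonneg _) (pow_nonneg hp0 _))
      (pow_nonneg (sub_nonneg.2 hp1) _)
  have hterm : ∀ k, P {ω | X ω = k ∧ t < |(k : ℝ) - n * p|} ≤ ENNReal.ofReal (g k) := by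
    intro k
    by_cases hk : t < |(k : ℝ) - n * p|
    · refine (measure_mono (t := {ω | X ω = k}) fun ω hω => hω.1).trans ?_
      rw [hX k]
      refine ENNReal.ofReal_le_ofReal (le_mul_of_one_le_left (hw k) ?_)
      rw [one_le_div (by positivity), ← sq_abs ((k : ℝ) - n * p)]
      exact pow_le_pow_left₀ ht.le hk.le 2
    · simp [hk]
  have hsupp : ∀ k ∉ Finset.range (n + 1), ENNReal.ofReal (g k) = 0 := fun k hk => by
    simp [g, w, Nat.choose_eq_zero_of_lt (by simpa using hk : n < k)]
  calc P {ω | t < |(X ω : ℝ) - n * p|}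
      ≤ P (⋃ k, {ω | X ω = k ∧ t < |(k : ℝ) - n * p|}) :=
        measure_mono fun ω hω => Set.mem_iUnion.2 ⟨X ω, rfl, hω⟩
    _ ≤ ∑' k, ENNReal.ofReal (g k) := (measure_iUnion_le _).trans (ENNReal.tsum_le_tsum hterm)
    _ = ENNReal.ofReal (∑ k ∈ Finset.range (n + 1), g k) := by
        rw [tsum_eq_sum hsupp, ENNReal.ofReal_sum_of_nonneg fun k _ => by positivity]
    _ = ENNReal.ofReal (n * p * (1 - p) / t ^ 2) := by
        simp only [g, div_mul_eq_mul_div, ← Finset.sum_div, w, sum_sq_sub_mul_binomial]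

theorem abs_taylorRem_le (r s : ℝ) {K η a b x y : ℝ} (hK : 0 ≤ K) (hη : η < 1)
    (hloc : ∀ h : ℝ × ℝ, ‖h‖ ≤ η → |relTaylorRem r s h| ≤ K * ‖h‖ ^ 2)
    (ha : 0 < a) (hb : 0 ≤ b) (hx : |x - a| ≤ η * a) (hy : |y - b| ≤ η * b) :
    |taylorRem r s a b x y| ≤ K * η ^ 2 * ratioFunP r s (a, b) := by
  have hab : 0 < a + b := by linarith
  have hη0 : 0 ≤ η := nonneg_of_mul_nonneg_left ((abs_nonneg _).trans hx) ha
  have hxy : |x + y - (a + b)| ≤ η * (a + b) := calc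
    |x + y - (a + b)| = |(x - a) + (y - b)| := by ring_nf
    _ ≤ |x - a| + |y - b| := abs_add_le _ _
    _ ≤ η * (a + b) := by linarith
  have hx0 : 0 < x := by nlinarith [(abs_le.1 hx).1]
  have hxy0 : 0 < x + y := by nlinarith [(abs_le.1 hxy).1]
  have hh : ‖((x - a) / a, (x + y - (a + b)) / (a + b))‖ ≤ η := by
    refine norm_prod_le_iff.2 ⟨?_, ?_⟩
    · rwa [Real.norm_eq_abs, abs_div, abs_of_pos ha, div_le_iff₀ ha]
    · rwa [Real.norm_eq_abs, abs_div, abs_of_pos hab, div_le_iff₀ hab]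
  have hf : 0 < ratioFunP r s (a, b) := by unfold ratioFunP; positivity
  rw [taylorRem_eq_mul_relTaylorRem r s ha hab hx0 hxy0, abs_mul, abs_of_pos hf, mul_comm]
  exact mul_le_mul_of_nonneg_right ((hloc _ hh).trans (by gcongr)) hf.le

theorem rpow_div_rpow_mul_ratioFunP_le {r : ℝ} (s : ℝ) (hr : 0 ≤ r) {N M p : ℝ} (hN : 0 < N)
    (hM : 0 < M) (hp : 0 < p) :
    M ^ r / N ^ (s - 1 / 2) * ratioFunP r s (N * p, M * p) ≤ p ^ (s - r) * N ^ (1 / 2 : ℝ) := by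
  calc M ^ r / N ^ (s - 1 / 2) * ratioFunP r s (N * p, M * p)
      ≤ M ^ r / N ^ (s - 1 / 2) * ((N * p) ^ s / (M * p) ^ r) := by
        unfold ratioFunP; gcongr; nlinarith
    _ = p ^ (s - r) * N ^ (1 / 2 : ℝ) := by
        rw [mul_rpow hN.le hp.le, mul_rpow hM.le hp.le, rpow_sub hp, rpow_sub hN]
        field_simp

theorem abs_scaled_taylorRem_le {r : ℝ} (s : ℝ) (hr : 0 ≤ r) {K η N M p x y : ℝ} (hK : 0 ≤ K)
    (hη : η < 1) (hloc : ∀ h : ℝ × ℝ, ‖h‖ ≤ η → |relTaylorRem r s h| ≤ K * ‖h‖ ^ 2)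
    (hN : 0 < N) (hM : 0 < M) (hp : 0 < p)
    (hx : |x - N * p| ≤ η * (N * p)) (hy : |y - M * p| ≤ η * (M * p)) :
    |M ^ r / N ^ (s - 1 / 2) * taylorRem r s (N * p) (M * p) x y| ≤
      K * p ^ (s - r) * (N ^ (1 / 2 : ℝ) * η ^ 2) := by
  have hscale : 0 ≤ M ^ r / N ^ (s - 1 / 2) := by positivity
  calc |M ^ r / N ^ (s - 1 / 2) * taylorRem r s (N * p) (M * p) x y|
      ≤ M ^ r / N ^ (s - 1 / 2) * (K * η ^ 2 * ratioFunP r s (N * p, M * p)) := by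
        rw [abs_mul, abs_of_nonneg hscale]
        gcongr
        exact abs_taylorRem_le r s hK hη hloc (by positivity) (by positivity) hx hy
    _ = K * η ^ 2 * (M ^ r / N ^ (s - 1 / 2) * ratioFunP r s (N * p, M * p)) := by ring
    _ ≤ K * η ^ 2 * (p ^ (s - r) * N ^ (1 / 2 : ℝ)) :=
        mul_le_mul_of_nonneg_left (rpow_div_rpow_mul_ratioFunP_le s hr hN hM hp) (by positivity)
    _ = K * p ^ (s - r) * (N ^ (1 / 2 : ℝ) * η ^ 2) := by ring

theorem tendsto_measure_binomial_deviation {Ω : Type*} [MeasurableSpace Ω] (P : Measure Ω)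
    {p : ℝ} (hp0 : 0 < p) (hp1 : p ≤ 1) (N : ℕ → ℕ) (η : ℕ → ℝ) (X : ℕ → Ω → ℕ)
    (hX : ∀ n k, P {ω | X n ω = k} =
      ENNReal.ofReal ((N n).choose k * p ^ k * (1 - p) ^ (N n - k)))
    (hη : ∀ᶠ n in atTop, 0 < η n)
    (hNη : Tendsto (fun n : ℕ => (N n : ℝ) * η n ^ 2) atTop atTop) :
    Tendsto (fun n => P {ω | η n * (N n * p) < |(X n ω : ℝ) - N n * p|}) atTop (𝓝 0) := by
  have hbound : Tendsto (fun n => ENNReal.ofReal ((1 - p) / p * ((N n : ℝ) * η n ^ 2)⁻¹))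
      atTop (𝓝 0) := by
    simpa using ENNReal.tendsto_ofReal (hNη.inv_tendsto_atTop.const_mul ((1 - p) / p))
  refine tendsto_of_tendsto_of_tendsto_of_le_of_le' tendsto_const_nhds hbound
    (Eventually.of_forall fun _ => zero_le) ?_
  filter_upwards [hη, hNη.eventually_gt_atTop 0] with n hηn hNηn
  have hN : (0 : ℝ) < N n := pos_of_mul_pos_left hNηn (sq_nonneg _)
  refine (measure_lt_abs_sub_le_of_binomial P hp0.le hp1 (X n) (N n) (hX n)
    (by positivity)).trans_eq ?_
  congr 1
  field_simp

theorem exists_deviation_scale :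
    ∃ η : ℕ → ℝ, (∀ᶠ n in atTop, 0 < η n) ∧ Tendsto η atTop (𝓝 0) ∧
      Tendsto (fun n : ℕ => (n : ℝ) * η n ^ 2) atTop atTop ∧
      Tendsto (fun n : ℕ => (n : ℝ) ^ (1 / 2 : ℝ) * η n ^ 2) atTop (𝓝 0) := by
  have hsq : ∀ x : ℝ, 0 < x → (x ^ (-(3 / 8) : ℝ)) ^ 2 = x ^ (-(3 / 4) : ℝ) := fun x hx => by
    rw [← rpow_natCast, ← rpow_mul hx.le]; norm_num
  refine ⟨fun n => (n : ℝ) ^ (-(3 / 8) : ℝ), ?_, ?_, ?_, ?_⟩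
  · filter_upwards [eventually_gt_atTop 0] with n hn
    positivity
  · exact (tendsto_rpow_neg_atTop (by norm_num)).comp tendsto_natCast_atTop_atTop
  · refine ((tendsto_rpow_atTop (by norm_num : (0 : ℝ) < 1 / 4)).comp
      tendsto_natCast_atTop_atTop).congr' ?_
    filter_upwards [eventually_gt_atTop 0] with n hn
    have hn' : (0 : ℝ) < n := by exact_mod_cast hn
    rw [Function.comp_apply, hsq _ hn', ← rpow_one_add' hn'.le (by norm_num)]
    norm_num
  · refine ((tendsto_rpow_neg_atTop (by norm_num : (0 : ℝ) < 1 / 4)).comp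
      tendsto_natCast_atTop_atTop).congr' ?_
    filter_upwards [eventually_gt_atTop 0] with n hn
    have hn' : (0 : ℝ) < n := by exact_mod_cast hn
    rw [Function.comp_apply, hsq _ hn', ← rpow_add hn']
    norm_num

theorem scaled_taylorRem_to_zero_in_prob_m_over_n_to_infty_general
    {Ω : Type*} [MeasurableSpace Ω] (P : Measure Ω)
    (r s p : ℝ) (hr : 0 < r) (hp0 : 0 < p) (hp1 : p < 1)
    (m : ℕ → ℕ)
    (hm1 : Tendsto (fun n : ℕ => (m n : ℝ) / (n : ℝ)) atTop atTop)
    (X Y : ℕ → Ω → ℕ)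
    (hXdist : ∀ n k, P {ω | X n ω = k} =
      ENNReal.ofReal ((n.choose k : ℝ) * p ^ k * (1 - p) ^ (n - k)))
    (hYdist : ∀ n k, P {ω | Y n ω = k} =
      ENNReal.ofReal (((m n).choose k : ℝ) * p ^ k * (1 - p) ^ (m n - k))) :
    ∀ ε > (0 : ℝ),
      Tendsto (fun n : ℕ =>
          P {ω | ε < |(m n : ℝ) ^ r / (n : ℝ) ^ (s - 1/2) *
            taylorRem r s (n * p) (m n * p) (X n ω : ℝ) (Y n ω : ℝ)|})
        atTop (nhds 0) := by
  intro ε hε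
  obtain ⟨K, hK, δ, hδ, hδ1, hloc⟩ := exists_abs_relTaylorRem_le r s
  obtain ⟨η, hηpos, hη0, hnη, hsqrtη⟩ := exists_deviation_scale
  have hmn : ∀ᶠ n : ℕ in atTop, (n : ℝ) ≤ m n := by
    filter_upwards [hm1.eventually_ge_atTop 1, eventually_gt_atTop 0] with n h hn
    rwa [le_div_iff₀ (by exact_mod_cast hn), one_mul] at h
  have hmη : Tendsto (fun n : ℕ => (m n : ℝ) * η n ^ 2) atTop atTop :=
    tendsto_atTop_mono' _ (hmn.mono fun n h => mul_le_mul_of_nonneg_right h (sq_nonneg _)) hnη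
  have hbad := (tendsto_measure_binomial_deviation P hp0 hp1.le (fun n => n) η X hXdist hηpos
    hnη).add (tendsto_measure_binomial_deviation P hp0 hp1.le m η Y hYdist hηpos hmη)
  rw [add_zero] at hbad
  have hsmall : ∀ᶠ n : ℕ in atTop, K * p ^ (s - r) * ((n : ℝ) ^ (1 / 2 : ℝ) * η n ^ 2) < ε :=
    (mul_zero (K * p ^ (s - r)) ▸ hsqrtη.const_mul _).eventually (gt_mem_nhds hε)
  refine tendsto_of_tendsto_of_tendsto_of_le_of_le' tendsto_const_nhds hbad
    (Eventually.of_forall fun _ => zero_le) ?_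
  filter_upwards [eventually_gt_atTop 0, hmn, hη0.eventually (ge_mem_nhds hδ), hsmall]
    with n hn hnm hηδ hεn
  refine (measure_mono fun ω hω => ?_).trans (measure_union_le _ _)
  by_contra hgood
  simp only [Set.mem_union, Set.mem_ofPred_eq, not_or, not_lt] at hω hgood
  have hn' : (0 : ℝ) < n := by exact_mod_cast hn
  exact (hεn.trans hω).not_ge (abs_scaled_taylorRem_le s hr.le hK (hηδ.trans_lt hδ1)
    (fun h hh => hloc h (hh.trans hηδ)) hn' (hn'.trans_le hnm) hp0 hgood.1 hgood.2)

/-- Let `r, s > 0`, `p ∈ (0,1)`, and suppose `m n / n → ∞` and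
`m n · log(m n) / n^(3/2) → 0`. For `X n ~ Binomial(n, p)` and `Y n ~ Binomial(m n, p)`
independent, the scaled Taylor remainder `(m^r / n^(s−1/2)) · Q(X, Y)` of
`f(x,y) = x^s/(x+y)^r` about `(np, mp)` converges to `0` in probability. -/
theorem scaled_taylorRem_to_zero_in_prob_m_over_n_to_infty
    {Ω : Type*} [MeasurableSpace Ω] (P : Measure Ω) [IsProbabilityMeasure P]
    (r s p : ℝ) (hr : 0 < r) (hs : 0 < s) (hp0 : 0 < p) (hp1 : p < 1)
    (m : ℕ → ℕ)
    (hm1 : Tendsto (fun n : ℕ => (m n : ℝ) / (n : ℝ)) atTop atTop)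
    (hm2 : Tendsto (fun n : ℕ => (m n : ℝ) * Real.log (m n) / (n : ℝ) ^ ((3 : ℝ) / 2))
      atTop (nhds 0))
    (X Y : ℕ → Ω → ℕ)
    (hXmeas : ∀ n, Measurable (X n)) (hYmeas : ∀ n, Measurable (Y n))
    (hXdist : ∀ n k, P {ω | X n ω = k} =
      ENNReal.ofReal ((n.choose k : ℝ) * p ^ k * (1 - p) ^ (n - k)))
    (hYdist : ∀ n k, P {ω | Y n ω = k} =
      ENNReal.ofReal (((m n).choose k : ℝ) * p ^ k * (1 - p) ^ (m n - k)))
    (hindep : ∀ n, IndepFun (X n) (Y n) P) :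
    ∀ ε > (0 : ℝ),
      Tendsto (fun n : ℕ =>
          P {ω | ε < |(m n : ℝ) ^ r / (n : ℝ) ^ (s - 1/2) *
            taylorRem r s (n * p) (m n * p) (X n ω : ℝ) (Y n ω : ℝ)|})
        atTop (nhds 0) :=
  scaled_taylorRem_to_zero_in_prob_m_over_n_to_infty_general P r s p hr hp0 hp1 m hm1 X Y hXdist
    hYdist
end
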